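/- Let G be a simple graph with no ds-completable card and let B be its set of bad vertices. Then the sum of degrees of vertices in B is at least |V(G)| + (|B| mod 2). -/

import Mathlib

open SimpleGraph Finset
open scoped Classical

variable {V : Type*}

/-- The degree of a vertex `u` in a simple graph `G`. -/
noncomputable def deg (G : SimpleGraph V) (u : V) : ℕ := (G.neighborSet u).ncard

/-- The degree of `u` in the card `G − v` (the vertex-deleted subgraph at `v`). -/
noncomputable def cardDeg (G : SimpleGraph V) (v u : V) : ℕ := (G.neighborSet u \ {v}).ncard

/-- The card `G − v` is ds-completable: for each degree `d`, the vertices of degree `d`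
in `G − v` are either all neighbours of `v` in `G` or all non-neighbours of `v` in `G`. -/
def DsCompletable (G : SimpleGraph V) (v : V) : Prop :=
  ∀ d : ℕ, (∀ u, u ≠ v → cardDeg G v u = d → G.Adj v u) ∨
           (∀ u, u ≠ v → cardDeg G v u = d → ¬ G.Adj v u)

/-- A vertex is bad if the graph contains a vertex of degree one less. -/
def Bad (G : SimpleGraph V) (v : V) : Prop := ∃ w, deg G w + 1 = deg G v

/-- A vertex is dull if the graph contains a vertex of degree one more. -/
def Dull (G : SimpleGraph V) (v : V) : Prop := ∃ w, deg G w = deg G v + 1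

/-- ε(s,t): the number of stubs on `s` used by edges from `s` to `t`
(for disjoint `s`, `t` this is the number of edges between them; for `s = t`
it is twice the number of edges inside `s`). -/
noncomputable def stubs (G : SimpleGraph V) (s t : Finset V) : ℕ :=
  ((s ×ˢ t).filter fun p => G.Adj p.1 p.2).card

/-- A vertex set is neighbourly if no vertex outside the set has a degree one less
than that of a vertex in the set. -/
def Neighbourly (G : SimpleGraph V) (K : Finset V) : Prop :=
  ∀ u ∉ K, ∀ w ∈ K, deg G u + 1 ≠ deg G w

/-- A vertex set is `d`-neighbourly if it contains a vertex `v` of degree `d` such that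
no vertex outside the set has a degree one less than that of any member other than `v`. -/
def DNeighbourly (G : SimpleGraph V) (d : ℕ) (K : Finset V) : Prop :=
  ∃ v ∈ K, deg G v = d ∧ ∀ u ∉ K, ∀ w ∈ K, w ≠ v → deg G u + 1 ≠ deg G w

namespace SimpleGraph

variable (G : SimpleGraph V)

lemma even_card_of_forall_existsUnique_adj (s : Finset V)
    (hs : ∀ v ∈ s, ∃! w, w ∈ s ∧ G.Adj v w) : Even #s := by
  have hM : ((⊤ : G.Subgraph).induce (s : Set V)).IsMatching := fun v hv => by
    have hv : v ∈ s := hv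
    simpa [hv] using hs v hv
  convert @Subgraph.IsMatching.even_card _ _ _ (FinsetCoe.fintype s) hM
  ext
  exact Set.mem_toFinset.symm

lemma sum_degree_eq_sum_card_filter_adj [Fintype V] [DecidableRel G.Adj] (s : Finset V) :
    ∑ v ∈ s, G.degree v = ∑ u, #{b ∈ s | G.Adj b u} := by
  simpa [bipartiteAbove, bipartiteBelow, ← neighborFinset_eq_filter] using
    sum_card_bipartiteAbove_eq_sum_card_bipartiteBelow (s := s) (t := univ) G.Adj

/-- If every vertex has a neighbour in `s`, the degrees in `s` count every vertex at least
once; equality would make `{b ∈ s | G.Adj b ·}` a perfect matching of `s`, so it needs `#s`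
even. -/
theorem card_add_card_mod_two_le_sum_degree [Fintype V] [DecidableRel G.Adj] (s : Finset V)
    (hs : ∀ u, ∃ b ∈ s, G.Adj b u) :
    Fintype.card V + #s % 2 ≤ ∑ v ∈ s, G.degree v := by
  rw [sum_degree_eq_sum_card_filter_adj]
  have hpos : ∀ u ∈ (univ : Finset V), 1 ≤ #{b ∈ s | G.Adj b u} := fun u _ => by
    obtain ⟨b, hb, hbu⟩ := hs u
    exact card_pos.mpr ⟨b, mem_filter.mpr ⟨hb, hbu⟩⟩
  have hle : Fintype.card V ≤ ∑ u, #{b ∈ s | G.Adj b u} := by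
    simpa using sum_le_sum hpos
  rcases Nat.mod_two_eq_zero_or_one #s with hpar | hpar
  · omega
  by_contra! hlt
  have hunique := (sum_eq_sum_iff_of_le hpos).mp (by
    rw [sum_const, card_univ, smul_eq_mul, mul_one]; omega)
  have hmatch : ∀ v ∈ s, ∃! w, w ∈ s ∧ G.Adj v w := fun v _ => by
    obtain ⟨w, hw⟩ := card_eq_one.mp (hunique v (mem_univ v)).symm
    refine ⟨w, ?_, fun x hx => ?_⟩
    · simpa [G.adj_comm v] using (Finset.ext_iff.mp hw w).mpr (mem_singleton_self w)
    · simpa using (Finset.ext_iff.mp hw x).mp (by simpa [G.adj_comm x] using hx)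
  have := G.even_card_of_forall_existsUnique_adj s hmatch
  rw [Nat.even_iff] at this
  omega

end SimpleGraph

lemma deg_eq_degree [Fintype V] (G : SimpleGraph V) (u : V) : deg G u = G.degree u := by
  rw [deg, Set.ncard_eq_toFinset_card', ← card_neighborSet_eq_degree, Set.toFinset_card]

lemma cardDeg_add_one_of_adj [Finite V] {G : SimpleGraph V} {v u : V} (h : G.Adj v u) :
    cardDeg G v u + 1 = deg G u :=
  Set.ncard_sdiff_singleton_add_one h.symm (Set.toFinite _)

lemma cardDeg_of_not_adj {G : SimpleGraph V} {v u : V} (h : ¬G.Adj v u) :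
    cardDeg G v u = deg G u := by
  rw [cardDeg, Set.sdiff_singleton_eq_self fun hv => h hv.symm, deg]

/-- Mulla's criterion: if some degree `d` of the card `G − v` occurs both at a neighbour `u`
and at a non-neighbour `u'` of `v`, then `deg u = d + 1` and `deg u' = d`, so `u` is bad. -/
lemma exists_bad_adj_of_not_dsCompletable [Finite V] {G : SimpleGraph V} {v : V}
    (h : ¬DsCompletable G v) : ∃ b, Bad G b ∧ G.Adj b v := by
  contrapose! h
  intro d
  by_cases hex : ∃ u', u' ≠ v ∧ ¬G.Adj v u' ∧ cardDeg G v u' = d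
  · obtain ⟨u', -, hu'v, hu'd⟩ := hex
    refine Or.inr fun u _ hud huv => h u ⟨u', ?_⟩ huv.symm
    rw [← cardDeg_of_not_adj hu'v, hu'd, ← hud, cardDeg_add_one_of_adj huv]
  · push Not at hex
    exact Or.inl fun u hu hud => by_contra fun huv => hex u hu huv hud

/-- In a graph with no ds-completable card, the degree sum of the bad vertices is at least
`|V| + (|B| mod 2)`. -/
theorem stmt10 [Fintype V] (G : SimpleGraph V)
    (h : ∀ v : V, ¬ DsCompletable G v) :
    Fintype.card V + (univ.filter fun v => Bad G v).card % 2 ≤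
      ∑ v ∈ univ.filter (fun v => Bad G v), deg G v := by
  have hB : ∀ u, ∃ b ∈ univ.filter fun v => Bad G v, G.Adj b u := fun u => by
    obtain ⟨b, hb, hbu⟩ := exists_bad_adj_of_not_dsCompletable (h u)
    exact ⟨b, mem_filter.mpr ⟨mem_univ b, hb⟩, hbu⟩
  simpa only [deg_eq_degree] using G.card_add_card_mod_two_le_sum_degree _ hB
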